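/- arXiv:2412.00654 — 3 statements merged into one kernel-verified Lean document; each statement's English description precedes it below -/
import Mathlib

section
/- For real constants a and b, the integral over ℝ of Φ(a + b·x)·φ(x) dx equals Φ(a/√(1+b²)), where φ and Φ are the PDF and CDF of the standard normal distribution. -/
/-!
With `X, Y` independent standard normal variables, `Φ(a + b x) = P(Y < a + b x)`, so the
integral is `P(Y - b X < a)`. The law of `Y - b X` is the convolution of `N(0, b²)` and
`N(0, 1)`, i.e. `N(0, 1 + b²)`, and rescaling by `√(1 + b²)` turns `P(Y - b X < a)` into
`Φ(a / √(1 + b²))`.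
-/

open MeasureTheory ProbabilityTheory Real Set

noncomputable def stdPdf (x : ℝ) : ℝ := (Real.sqrt (2 * Real.pi))⁻¹ * Real.exp (-x ^ 2 / 2)

noncomputable def stdCdf (t : ℝ) : ℝ := ∫ x in Set.Iio t, stdPdf x

open scoped NNReal

namespace MeasureTheory.Measure

lemma conv_real_apply {G : Type*} [AddMonoid G] [MeasurableSpace G] [MeasurableAdd₂ G]
    {μ ν : Measure G} [IsFiniteMeasure μ] [IsFiniteMeasure ν] {s : Set G} (hs : MeasurableSet s) :
    (μ ∗ ν).real s = ∫ x, ν.real ((x + ·) ⁻¹' s) ∂μ := by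
  rw [← integral_indicator_one hs, integral_conv ((integrable_const 1).indicator hs)]
  congr with x
  rw [← integral_indicator_one (measurable_const_add x hs)]
  rfl

end MeasureTheory.Measure

lemma measurable_measureReal_Iio_sub (μ : Measure ℝ) [IsFiniteMeasure μ] (a : ℝ) :
    Measurable fun y ↦ μ.real (Iio (a - y)) :=
  Antitone.measurable fun _ _ hxy ↦ measureReal_mono (Iio_subset_Iio (by linarith))

lemma stdPdf_eq_gaussianPDFReal : stdPdf = gaussianPDFReal 0 1 := by
  ext x
  simp [stdPdf, gaussianPDFReal]

lemma integral_mul_stdPdf (f : ℝ → ℝ) :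
    ∫ x, f x * stdPdf x = ∫ x, f x ∂gaussianReal 0 1 := by
  simp_rw [integral_gaussianReal_eq_integral_smul one_ne_zero, stdPdf_eq_gaussianPDFReal,
    smul_eq_mul, mul_comm]

lemma stdCdf_eq_measureReal_gaussianReal (t : ℝ) :
    stdCdf t = (gaussianReal 0 1).real (Iio t) := by
  rw [measureReal_def, gaussianReal_apply_eq_integral 0 one_ne_zero, ENNReal.toReal_ofReal
    (setIntegral_nonneg measurableSet_Iio fun x _ ↦ gaussianPDFReal_nonneg 0 1 x),
    stdCdf, stdPdf_eq_gaussianPDFReal]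

lemma measureReal_gaussianReal_Iio {v : ℝ≥0} (hv : v ≠ 0) (t : ℝ) :
    (gaussianReal 0 v).real (Iio t) = stdCdf (t / √v) := by
  have hs : 0 < √(v : ℝ) := Real.sqrt_pos.2 (by positivity)
  have hmap : (gaussianReal 0 1).map (√(v : ℝ) * ·) = gaussianReal 0 v := by
    rw [gaussianReal_map_const_mul, mul_zero, mul_one]
    exact congrArg _ (NNReal.eq (by simp))
  rw [← hmap, map_measureReal_apply (by fun_prop) measurableSet_Iio,
    stdCdf_eq_measureReal_gaussianReal]
  congr
  ext x
  simp [lt_div_iff₀' hs]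

theorem stmt0 (a b : ℝ) :
    ∫ x : ℝ, stdCdf (a + b * x) * stdPdf x = stdCdf (a / Real.sqrt (1 + b ^ 2)) := by
  calc ∫ x, stdCdf (a + b * x) * stdPdf x
      = ∫ y, (gaussianReal 0 1).real (Iio (a - y)) ∂(gaussianReal 0 1).map ((-b) * ·) := by
        rw [integral_mul_stdPdf, integral_map (by fun_prop)
          (measurable_measureReal_Iio_sub _ a).aestronglyMeasurable]
        simp [stdCdf_eq_measureReal_gaussianReal, sub_eq_add_neg]
    _ = ((gaussianReal 0 1).map ((-b) * ·) ∗ gaussianReal 0 1).real (Iio a) := by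
        simp [Measure.conv_real_apply measurableSet_Iio]
    _ = (gaussianReal 0 (1 + ‖b‖₊ ^ 2)).real (Iio a) := by
        rw [gaussianReal_map_const_mul, gaussianReal_conv_gaussianReal]
        congr 2
        · simp
        · exact NNReal.eq (by simp [add_comm])
    _ = stdCdf (a / Real.sqrt (1 + b ^ 2)) := by
        rw [measureReal_gaussianReal_Iio (by positivity)]
        simp
end

section
/- For real constants a and b, the integral over ℝ of x·Φ(a + b·x)·φ(x) dx equals (b/√(1+b²))·φ(a/√(1+b²)). -/
open MeasureTheory ProbabilityTheory Real Set

lemma continuous_stdPdf : Continuous stdPdf := by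
  unfold stdPdf; fun_prop

lemma stdPdf_eq (x : ℝ) : stdPdf x = (Real.sqrt (2 * Real.pi))⁻¹ * Real.exp (-(1/2) * x ^ 2) := by
  unfold stdPdf; ring_nf

lemma integrable_stdPdf : Integrable stdPdf := by
  simp only [funext stdPdf_eq]
  exact (integrable_exp_neg_mul_sq (by norm_num : (0:ℝ) < 1/2)).const_mul _

lemma integrable_mul_stdPdf : Integrable (fun x => x * stdPdf x) := by
  have := (integrable_mul_exp_neg_mul_sq (by norm_num : (0:ℝ) < 1/2)).const_mul
    ((Real.sqrt (2 * Real.pi))⁻¹)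
  refine this.congr ?_
  filter_upwards with x
  rw [stdPdf_eq]; ring

lemma stdPdf_nonneg (x : ℝ) : 0 ≤ stdPdf x :=
  mul_nonneg (inv_nonneg.2 (Real.sqrt_nonneg _)) (Real.exp_pos _).le

lemma stdPdf_le (x : ℝ) : stdPdf x ≤ (Real.sqrt (2 * Real.pi))⁻¹ := by
  have h1 : Real.exp (-x ^ 2 / 2) ≤ 1 := Real.exp_le_one_iff.2 (by nlinarith [sq_nonneg x])
  calc stdPdf x = (Real.sqrt (2 * Real.pi))⁻¹ * Real.exp (-x ^ 2 / 2) := rfl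
    _ ≤ (Real.sqrt (2 * Real.pi))⁻¹ * 1 := by
        exact mul_le_mul_of_nonneg_left h1 (inv_nonneg.2 (Real.sqrt_nonneg _))
    _ = _ := mul_one _

lemma stdCdf_eq (t : ℝ) : stdCdf t = stdCdf 0 + ∫ x in (0:ℝ)..t, stdPdf x := by
  have h : ∀ s : ℝ, stdCdf s = ∫ x in Set.Iic s, stdPdf x := fun s =>
    setIntegral_congr_set Iio_ae_eq_Iic
  have h2 := intervalIntegral.integral_Iic_sub_Iic
    (integrable_stdPdf.integrableOn (s := Set.Iic 0))
    (integrable_stdPdf.integrableOn (s := Set.Iic t))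
  rw [h, h]
  linarith
 
lemma hasDerivAt_stdCdf (t : ℝ) : HasDerivAt stdCdf (stdPdf t) t := by
  have hF : HasDerivAt (fun u => ∫ x in (0:ℝ)..u, stdPdf x) (stdPdf t) t :=
    intervalIntegral.integral_hasDerivAt_right
      (integrable_stdPdf.intervalIntegrable)
      (continuous_stdPdf.stronglyMeasurableAtFilter _ _)
      continuous_stdPdf.continuousAt
  have h2 : HasDerivAt (fun u => stdCdf 0 + ∫ x in (0:ℝ)..u, stdPdf x) (stdPdf t) t :=
    hF.const_add _
  exact h2.congr_of_eventuallyEq (Filter.Eventually.of_forall fun s => stdCdf_eq s)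

lemma continuous_stdCdf : Continuous stdCdf :=
  continuous_iff_continuousAt.2 fun t => (hasDerivAt_stdCdf t).continuousAt

lemma stdCdf_bound (t : ℝ) : ‖stdCdf t‖ ≤ ∫ x, stdPdf x := by
  rw [Real.norm_eq_abs]
  unfold stdCdf
  rw [abs_of_nonneg (setIntegral_nonneg measurableSet_Iio fun x _ => stdPdf_nonneg x)]
  exact setIntegral_le_integral integrable_stdPdf
    (Filter.Eventually.of_forall stdPdf_nonneg)

lemma sqrt_two_pi_pos : 0 < Real.sqrt (2 * Real.pi) :=
  Real.sqrt_pos.2 (by positivity)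

lemma integral_stdPdf_convolution (a b : ℝ) :
    ∫ x : ℝ, stdPdf (a + b * x) * stdPdf x
      = (Real.sqrt (1 + b ^ 2))⁻¹ * stdPdf (a / Real.sqrt (1 + b ^ 2)) := by
  set s : ℝ := Real.sqrt (1 + b ^ 2) with hs
  have hs0 : 0 < s := Real.sqrt_pos.2 (by positivity)
  have hs2 : s ^ 2 = 1 + b ^ 2 := Real.sq_sqrt (by positivity)
  set c : ℝ := (Real.sqrt (2 * Real.pi))⁻¹ with hc
  have mulexp : ∀ u v : ℝ, (c * Real.exp u) * (c * Real.exp v) = c * c * Real.exp (u + v) :=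
    fun u v => by rw [Real.exp_add]; ring
  have key : ∀ x : ℝ, stdPdf (a + b * x) * stdPdf x
      = stdPdf (a / s) * (c * Real.exp (-(1/2) * (s * x + a * b / s) ^ 2)) := by
    intro x
    show (c * Real.exp (-(a + b*x) ^ 2 / 2)) * (c * Real.exp (-x ^ 2 / 2))
      = (c * Real.exp (-(a/s) ^ 2 / 2)) * (c * Real.exp (-(1/2) * (s * x + a * b / s) ^ 2))
    rw [mulexp, mulexp]
    have hsne : s ≠ 0 := ne_of_gt hs0
    have e1 : (s * x + a * b / s) ^ 2
        = (1 + b ^ 2) * x ^ 2 + 2 * (x * (a * b)) + (a * b) ^ 2 / (1 + b ^ 2) := by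
      rw [add_sq, mul_pow, hs2, div_pow, hs2,
        show 2 * (s * x) * (a * b / s) = 2 * (x * (a * b)) by field_simp]
    have e2 : (a / s) ^ 2 = a ^ 2 / (1 + b ^ 2) := by rw [div_pow, hs2]
    congr 1
    rw [e1, e2]
    have hb : (1 + b ^ 2) ≠ 0 := by positivity
    congr 1
    field_simp
    ring
  rw [integral_congr_ae (Filter.Eventually.of_forall key)]
  rw [integral_const_mul, integral_const_mul]
  have step1 : (∫ x : ℝ, Real.exp (-(1/2) * (s * x + a * b / s) ^ 2))
      = |s⁻¹| • ∫ y : ℝ, Real.exp (-(1/2) * (y + a * b / s) ^ 2) :=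
    Measure.integral_comp_mul_left (fun y => Real.exp (-(1/2) * (y + a * b / s) ^ 2)) s
  have step2 : (∫ y : ℝ, Real.exp (-(1/2) * (y + a * b / s) ^ 2))
      = ∫ y : ℝ, Real.exp (-(1/2) * y ^ 2) :=
    integral_add_right_eq_self (fun y => Real.exp (-(1/2) * y ^ 2)) (a * b / s)
  have step3 : (∫ y : ℝ, Real.exp (-(1/2) * y ^ 2)) = Real.sqrt (2 * Real.pi) := by
    rw [integral_gaussian]
    rw [show Real.pi / (1/2) = 2 * Real.pi by ring]
  rw [step1, step2, step3]
  rw [abs_of_pos (inv_pos.2 hs0), smul_eq_mul]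
  have hcne : c * Real.sqrt (2 * Real.pi) = 1 := by
    rw [hc, inv_mul_cancel₀ (ne_of_gt sqrt_two_pi_pos)]
  calc stdPdf (a / s) * (c * (s⁻¹ * Real.sqrt (2 * Real.pi)))
      = s⁻¹ * stdPdf (a / s) * (c * Real.sqrt (2 * Real.pi)) := by ring
    _ = s⁻¹ * stdPdf (a / s) := by rw [hcne, mul_one]

theorem stmt2 (a b : ℝ) :
    ∫ x : ℝ, x * stdCdf (a + b * x) * stdPdf x
      = (b / Real.sqrt (1 + b ^ 2)) * stdPdf (a / Real.sqrt (1 + b ^ 2)) := by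
  set u : ℝ → ℝ := fun x => stdCdf (a + b * x) with hu_def
  set u' : ℝ → ℝ := fun x => b * stdPdf (a + b * x) with hu'_def
  set v : ℝ → ℝ := fun x => -stdPdf x with hv_def
  set v' : ℝ → ℝ := fun x => x * stdPdf x with hv'_def
  have hu : ∀ x, HasDerivAt u (u' x) x := by
    intro x
    have h1 : HasDerivAt (fun x : ℝ => a + b * x) b x := by
      simpa using ((hasDerivAt_id x).const_mul b).const_add a
    have h2 := (hasDerivAt_stdCdf (a + b * x)).comp x h1
    simpa [hu_def, hu'_def, Function.comp_def, mul_comm] using h2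
  have hv : ∀ x, HasDerivAt v (v' x) x := by
    intro x
    have h0 : HasDerivAt (fun x : ℝ => -x ^ 2 / 2) (-x) x := by
      have h := ((hasDerivAt_pow 2 x).neg).div_const 2
      norm_num at h
      convert h using 1
      · rfl
      · rfl
      · ring
    have h1 := h0.exp
    have h2 := (h1.const_mul ((Real.sqrt (2 * Real.pi))⁻¹)).neg
    have h3 : -((Real.sqrt (2 * Real.pi))⁻¹ * (Real.exp (-x ^ 2 / 2) * -x)) = v' x := by
      simp only [hv'_def]; unfold stdPdf; ring
    rw [h3] at h2
    exact h2.congr_of_eventuallyEq (Filter.Eventually.of_forall fun s => rfl)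
  have humeas : AEStronglyMeasurable u volume :=
    (continuous_stdCdf.comp (by fun_prop)).aestronglyMeasurable
  have huv' : Integrable (fun x => u x * v' x) :=
    Integrable.bdd_mul integrable_mul_stdPdf humeas (Filter.Eventually.of_forall fun x => stdCdf_bound _)
  have huv : Integrable (fun x => u x * v x) :=
    Integrable.bdd_mul integrable_stdPdf.neg humeas (Filter.Eventually.of_forall fun x => stdCdf_bound _)
  have hu'v : Integrable (fun x => u' x * v x) := by
    have hcont : Continuous fun x : ℝ => stdPdf (a + b * x) :=
      continuous_stdPdf.comp (by continuity)
    refine Integrable.bdd_mul (c := |b| * (Real.sqrt (2 * Real.pi))⁻¹) integrable_stdPdf.neg ?_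
      (Filter.Eventually.of_forall fun x => ?_)
    · exact (continuous_const.mul hcont).aestronglyMeasurable
    · rw [hu'_def, Real.norm_eq_abs, abs_mul, abs_of_nonneg (stdPdf_nonneg _)]
      exact mul_le_mul_of_nonneg_left (stdPdf_le _) (abs_nonneg b)
  have hIBP := MeasureTheory.integral_mul_deriv_eq_deriv_mul_of_integrable (fun x _ => hu x) (fun x _ => hv x) huv' hu'v huv
  have lhs_eq : (∫ x : ℝ, x * stdCdf (a + b * x) * stdPdf x) = ∫ x : ℝ, u x * v' x := by
    refine integral_congr_ae (Filter.Eventually.of_forall fun x => ?_)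
    simp only [hu_def, hv'_def]; ring
  have rhs_eq : (∫ x : ℝ, u' x * v x) = -(b * ∫ x : ℝ, stdPdf (a + b * x) * stdPdf x) := by
    rw [← integral_const_mul, ← integral_neg]
    refine integral_congr_ae (Filter.Eventually.of_forall fun x => ?_)
    simp only [hu'_def, hv_def]; ring
  rw [lhs_eq, hIBP, rhs_eq, neg_neg, integral_stdPdf_convolution a b, div_eq_mul_inv]
  ring
end

section
/- Suppose η* ~ N(m, s²) with s > 0, and conditionally on η*, ε* ~ N(y − η*, σ²) with σ > 0. Then for any δ ∈ ℝ, the expected unimprovement E[max(ε* − δ, 0)] + E[max(−ε* − δ, 0)] equals (y − m − δ)·(1 − Φ((δ − (y − m))/√(σ² + s²))) + √(σ² + s²)·φ((δ − (y − m))/√(σ² + s²)) + (−δ − (y − m))·Φ((−δ − (y − m))/√(σ² + s²)) + √(σ² + s²)·φ((−δ − (y − m))/√(σ² + s²)). (Proposition 2, expected improvement.) -/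
open MeasureTheory ProbabilityTheory Real Set Filter
open scoped NNReal ENNReal

namespace EIAux

lemma gauss_exp_conv (v w a c : ℝ) (hv : 0 < v) (hw : 0 < w) :
    ∫ u : ℝ, Real.exp (-(u - a) ^ 2 / (2 * v)) * Real.exp (-(u - c) ^ 2 / (2 * w))
      = Real.sqrt (2 * π * (v * w) / (v + w)) * Real.exp (-(a - c) ^ 2 / (2 * (v + w))) := by
  have hvw : 0 < v + w := by linarith
  have hvne := hv.ne'
  have hwne := hw.ne'
  have hvwne := hvw.ne'
  set k : ℝ := (v + w) / (2 * v * w) with hk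
  have hkpos : 0 < k := by positivity
  set d : ℝ := (a * w + c * v) / (v + w) with hd
  have key : ∀ u : ℝ, Real.exp (-(u - a) ^ 2 / (2 * v)) * Real.exp (-(u - c) ^ 2 / (2 * w))
      = Real.exp (-k * (u - d) ^ 2) * Real.exp (-(a - c) ^ 2 / (2 * (v + w))) := by
    intro u
    rw [← Real.exp_add, ← Real.exp_add]
    congr 1
    rw [hk, hd]
    field_simp
    ring
  simp_rw [key]
  rw [integral_mul_const]
  congr 1
  rw [show (fun u : ℝ => Real.exp (-k * (u - d) ^ 2))
      = fun u : ℝ => (fun x : ℝ => Real.exp (-k * x ^ 2)) (u - d) from rfl]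
  rw [integral_sub_right_eq_self (fun x : ℝ => Real.exp (-k * x ^ 2)) d, integral_gaussian]
  congr 1
  rw [hk]
  field_simp

lemma pdf_conv (V W : ℝ≥0) (hV : 0 < (V : ℝ)) (hW : 0 < (W : ℝ)) (y mm x : ℝ) :
    ∫ h : ℝ, gaussianPDFReal mm V h * gaussianPDFReal (y - h) W x
      = gaussianPDFReal (y - mm) (V + W) x := by
  simp only [gaussianPDFReal]
  have h1 : ∀ h : ℝ, (Real.sqrt (2 * π * V))⁻¹ * Real.exp (-(h - mm) ^ 2 / (2 * V)) *
      ((Real.sqrt (2 * π * W))⁻¹ * Real.exp (-(x - (y - h)) ^ 2 / (2 * W)))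
      = ((Real.sqrt (2 * π * V))⁻¹ * (Real.sqrt (2 * π * W))⁻¹) *
        (Real.exp (-(h - mm) ^ 2 / (2 * V)) * Real.exp (-(h - (y - x)) ^ 2 / (2 * W))) := by
    intro h
    rw [show (x - (y - h)) ^ 2 = (h - (y - x)) ^ 2 by ring]
    ring
  simp_rw [h1]
  rw [integral_const_mul, gauss_exp_conv (V : ℝ) (W : ℝ) mm (y - x) hV hW]
  rw [show (mm - (y - x)) ^ 2 = (x - (y - mm)) ^ 2 by ring]
  have hVW : (0 : ℝ) < (V : ℝ) + (W : ℝ) := by linarith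
  have hcast : ((V + W : ℝ≥0) : ℝ) = (V : ℝ) + (W : ℝ) := by push_cast; ring
  rw [hcast, ← mul_assoc, ← mul_assoc]
  congr 2
  rw [← Real.sqrt_inv, ← Real.sqrt_inv, ← Real.sqrt_inv,
    ← Real.sqrt_mul (by positivity), ← Real.sqrt_mul (by positivity)]
  congr 1
  have hπ : (0 : ℝ) < π := Real.pi_pos
  field_simp

lemma measurable_gaussian_shift (y : ℝ) (W : ℝ≥0) (hW : W ≠ 0) :
    Measurable fun h : ℝ => gaussianReal (y - h) W := by
  refine Measure.measurable_of_measurable_coe _ fun s hs => ?_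
  simp_rw [gaussianReal_apply _ hW s, gaussianPDF_def]
  have hm : Measurable fun p : ℝ × ℝ =>
      ENNReal.ofReal (gaussianPDFReal (y - p.1) W p.2) := by
    simp only [gaussianPDFReal]
    fun_prop
  exact hm.lintegral_prod_right'

lemma gauss_bind (y mm : ℝ) (V W : ℝ≥0) (hV : V ≠ 0) (hW : W ≠ 0) :
    (gaussianReal mm V).bind (fun h => gaussianReal (y - h) W)
      = gaussianReal (y - mm) (V + W) := by
  have hVR : 0 < (V : ℝ) := by positivity
  have hWR : 0 < (W : ℝ) := by positivity
  have hVW : V + W ≠ 0 := by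
    simp only [ne_eq, add_eq_zero]
    tauto
  ext s hs
  rw [Measure.bind_apply hs (measurable_gaussian_shift y W hW).aemeasurable]
  have hcoe : Measurable fun h : ℝ => gaussianReal (y - h) W s :=
    (Measure.measurable_coe hs).comp (measurable_gaussian_shift y W hW)
  rw [gaussianReal_of_var_ne_zero _ hV,
    lintegral_withDensity_eq_lintegral_mul _ (measurable_gaussianPDF mm V) hcoe]
  simp only [Pi.mul_apply]
  have hin : ∀ h : ℝ, gaussianPDF mm V h * gaussianReal (y - h) W s
      = ∫⁻ x in s, gaussianPDF mm V h * gaussianPDF (y - h) W x := by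
    intro h
    rw [gaussianReal_apply _ hW s, ← lintegral_const_mul' _ _ (by simp [gaussianPDF_def])]
  simp_rw [hin]
  have hjoint : Measurable (Function.uncurry fun (h : ℝ) (x : ℝ) =>
      gaussianPDF mm V h * gaussianPDF (y - h) W x) := by
    simp only [gaussianPDF_def, gaussianPDFReal, Function.uncurry]
    fun_prop
  rw [lintegral_lintegral_swap hjoint.aemeasurable]
  rw [gaussianReal_apply _ hVW s]
  refine setLIntegral_congr_fun hs (fun x _ => ?_)
  simp only [gaussianPDF_def]
  have hnn : ∀ h : ℝ, 0 ≤ gaussianPDFReal mm V h * gaussianPDFReal (y - h) W x :=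
    fun h => mul_nonneg (gaussianPDFReal_nonneg _ _ _) (gaussianPDFReal_nonneg _ _ _)
  have hint : Integrable fun h : ℝ => gaussianPDFReal mm V h * gaussianPDFReal (y - h) W x := by
    have hmeas : Measurable fun h : ℝ =>
        gaussianPDFReal mm V h * gaussianPDFReal (y - h) W x := by
      simp only [gaussianPDFReal]
      fun_prop
    refine Integrable.mono' ((integrable_gaussianPDFReal mm V).const_mul
      ((Real.sqrt (2 * π * W))⁻¹)) hmeas.aestronglyMeasurable ?_
    refine Filter.Eventually.of_forall fun h => ?_
    rw [Real.norm_of_nonneg (hnn h), mul_comm ((Real.sqrt (2 * π * W))⁻¹)]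
    refine mul_le_mul_of_nonneg_left ?_ (gaussianPDFReal_nonneg _ _ _)
    unfold gaussianPDFReal
    have : Real.exp (-(x - (y - h)) ^ 2 / (2 * W)) ≤ 1 := by
      rw [Real.exp_le_one_iff]
      apply div_nonpos_of_nonpos_of_nonneg
      · simp [sq_nonneg]
      · positivity
    calc (Real.sqrt (2 * π * W))⁻¹ * Real.exp (-(x - (y - h)) ^ 2 / (2 * W))
        ≤ (Real.sqrt (2 * π * W))⁻¹ * 1 := by
          exact mul_le_mul_of_nonneg_left this (by positivity)
      _ = (Real.sqrt (2 * π * W))⁻¹ := mul_one _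
  calc ∫⁻ h, ENNReal.ofReal (gaussianPDFReal mm V h)
        * ENNReal.ofReal (gaussianPDFReal (y - h) W x)
      = ∫⁻ h, ENNReal.ofReal (gaussianPDFReal mm V h * gaussianPDFReal (y - h) W x) := by
        simp_rw [ENNReal.ofReal_mul (gaussianPDFReal_nonneg mm V _)]
    _ = ENNReal.ofReal (∫ h, gaussianPDFReal mm V h * gaussianPDFReal (y - h) W x) := by
        rw [← ofReal_integral_eq_lintegral_ofReal hint
          (Filter.Eventually.of_forall hnn)]
    _ = ENNReal.ofReal (gaussianPDFReal (y - mm) (V + W) x) := by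
        rw [pdf_conv V W hVR hWR y mm x]

lemma integral_gaussianReal (M : ℝ) (V : ℝ≥0) (hV : V ≠ 0) (g : ℝ → ℝ) :
    ∫ x, g x ∂(gaussianReal M V) = ∫ x, gaussianPDFReal M V x * g x := by
  rw [gaussianReal_of_var_ne_zero _ hV]
  have hd : gaussianPDF M V = fun x => ((gaussianPDFReal M V x).toNNReal : ℝ≥0∞) := rfl
  rw [hd, integral_withDensity_eq_integral_smul
    ((measurable_gaussianPDFReal M V).real_toNNReal) g]
  congr 1
  funext x
  simp [NNReal.smul_def, Real.coe_toNNReal _ (gaussianPDFReal_nonneg M V x)]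

lemma sqrt_mul_pdf (M : ℝ) (V : ℝ≥0) (hV : 0 < (V : ℝ)) (t : ℝ) :
    Real.sqrt V * gaussianPDFReal M V (Real.sqrt V * t + M) = stdPdf t := by
  have hs : 0 < Real.sqrt (V : ℝ) := Real.sqrt_pos.mpr hV
  simp only [gaussianPDFReal, stdPdf]
  rw [show Real.sqrt (V : ℝ) * t + M - M = Real.sqrt (V : ℝ) * t by ring,
    mul_pow, Real.sq_sqrt hV.le,
    show 2 * π * (V : ℝ) = (2 * π) * (V : ℝ) by ring,
    Real.sqrt_mul (by positivity) (V : ℝ),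
    show -((V : ℝ) * t ^ 2) / (2 * (V : ℝ)) = -t ^ 2 / 2 by field_simp]
  rw [mul_inv, ← mul_assoc]
  congr 1
  rw [mul_comm, mul_assoc, inv_mul_cancel₀ hs.ne', mul_one]

lemma integral_pdf_standardize (M : ℝ) (V : ℝ≥0) (hV : 0 < (V : ℝ)) (g : ℝ → ℝ) :
    ∫ x, gaussianPDFReal M V x * g x
      = ∫ t, stdPdf t * g (Real.sqrt V * t + M) := by
  have hs : 0 < Real.sqrt (V : ℝ) := Real.sqrt_pos.mpr hV
  have h1 : ∫ x, gaussianPDFReal M V x * g x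
      = ∫ x, gaussianPDFReal M V (x + M) * g (x + M) :=
    (integral_add_right_eq_self (fun x => gaussianPDFReal M V x * g x) M).symm
  rw [h1]
  have h2 := MeasureTheory.Measure.integral_comp_mul_left
    (fun x => gaussianPDFReal M V (x + M) * g (x + M)) (Real.sqrt V)
  rw [abs_of_pos (inv_pos.mpr hs), smul_eq_mul] at h2
  have h3 : ∫ x, gaussianPDFReal M V (x + M) * g (x + M)
      = Real.sqrt V * ∫ t, gaussianPDFReal M V (Real.sqrt V * t + M)
          * g (Real.sqrt V * t + M) := by
    rw [h2, ← mul_assoc, mul_inv_cancel₀ hs.ne', one_mul]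
  rw [h3, ← MeasureTheory.integral_const_mul]
  congr 1
  funext t
  rw [← mul_assoc, sqrt_mul_pdf M V hV t]

lemma stdPdf_eq : stdPdf = gaussianPDFReal 0 1 := by
  funext x
  simp [stdPdf, gaussianPDFReal]

lemma stdPdf_nonneg (x : ℝ) : 0 ≤ stdPdf x := by
  unfold stdPdf; positivity

lemma stdPdf_even (x : ℝ) : stdPdf (-x) = stdPdf x := by
  simp [stdPdf, neg_pow]

lemma integrable_stdPdf : Integrable stdPdf := by
  rw [stdPdf_eq]; exact integrable_gaussianPDFReal 0 1

lemma integral_stdPdf : ∫ x, stdPdf x = 1 := by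
  rw [stdPdf_eq]; exact integral_gaussianPDFReal_eq_one 0 one_ne_zero

lemma integrable_mul_stdPdf : Integrable fun t : ℝ => t * stdPdf t := by
  have h := (integrable_mul_exp_neg_mul_sq (b := 1/2) (by norm_num)).const_mul
    ((Real.sqrt (2 * π))⁻¹)
  refine h.congr (Filter.Eventually.of_forall fun t => ?_)
  simp only [stdPdf]
  rw [show -(1/2 : ℝ) * t ^ 2 = -t ^ 2 / 2 by ring]
  ring

lemma hasDerivAt_neg_stdPdf (x : ℝ) :
    HasDerivAt (fun t => -stdPdf t) (x * stdPdf x) x := by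
  have h1 : HasDerivAt (fun t : ℝ => -t ^ 2 / 2) (-x) x := by
    have h0 := ((hasDerivAt_pow 2 x).neg).div_const 2
    refine h0.congr_deriv ?_
    push_cast
    ring
  have h2 := (h1.exp).const_mul ((Real.sqrt (2 * π))⁻¹)
  have h3 := h2.neg
  refine h3.congr_deriv ?_
  simp only [stdPdf]
  ring

lemma tendsto_stdPdf_atTop : Tendsto (fun t => -stdPdf t) atTop (nhds 0) := by
  have h1 : Tendsto (fun t : ℝ => t ^ 2 / 2) atTop atTop :=
    (tendsto_pow_atTop (by norm_num)).atTop_div_const (by norm_num)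
  have h2 : Tendsto (fun t : ℝ => -t ^ 2 / 2) atTop atBot := by
    have h2' := tendsto_neg_atTop_atBot.comp h1
    simpa only [Function.comp_def, neg_div] using h2'
  have h3 := (Real.tendsto_exp_atBot.comp h2).const_mul ((Real.sqrt (2 * π))⁻¹)
  rw [mul_zero] at h3
  have h4 : Tendsto stdPdf atTop (nhds 0) := h3.congr fun t => rfl
  simpa only [neg_zero] using h4.neg

lemma continuous_stdPdf : Continuous stdPdf := by
  unfold stdPdf; fun_prop

lemma stdCdf_tail (c : ℝ) : ∫ t in Ioi c, stdPdf t = 1 - stdCdf c := by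
  have h := intervalIntegral.integral_Iio_add_Ici (f := stdPdf) (μ := volume) (b := c)
    integrable_stdPdf.integrableOn integrable_stdPdf.integrableOn
  rw [integral_Ici_eq_integral_Ioi] at h
  have : stdCdf c + ∫ t in Ioi c, stdPdf t = 1 := by
    rw [stdCdf]; rw [h]; exact integral_stdPdf
  linarith

lemma integral_max_std (c : ℝ) :
    ∫ t, stdPdf t * max (t - c) 0 = stdPdf c - c * (1 - stdCdf c) := by
  have hind : (fun t => stdPdf t * max (t - c) 0)
      = (Ioi c).indicator (fun t => stdPdf t * (t - c)) := by
    funext t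
    by_cases h : c < t
    · rw [indicator_of_mem (mem_Ioi.mpr h), max_eq_left (by linarith)]
    · rw [indicator_of_notMem (by simpa using h),
        max_eq_right (by push_neg at h; linarith), mul_zero]
  rw [hind, integral_indicator measurableSet_Ioi]
  have hsplit : ∀ t : ℝ, stdPdf t * (t - c) = t * stdPdf t - c * stdPdf t :=
    fun t => by ring
  simp_rw [hsplit]
  rw [integral_sub integrable_mul_stdPdf.integrableOn
    (integrable_stdPdf.integrableOn.const_mul c), MeasureTheory.integral_const_mul]
  have h2 : ∫ t in Ioi c, t * stdPdf t = stdPdf c := by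
    have hcont : ContinuousWithinAt (fun t => -stdPdf t) (Ici c) c :=
      (continuous_stdPdf.neg).continuousWithinAt
    have hderiv : ∀ x ∈ Ioi c, HasDerivAt (fun t => -stdPdf t) (x * stdPdf x) x :=
      fun x _ => hasDerivAt_neg_stdPdf x
    have := integral_Ioi_of_hasDerivAt_of_tendsto hcont hderiv
      integrable_mul_stdPdf.integrableOn tendsto_stdPdf_atTop
    simpa using this
  rw [h2, stdCdf_tail]

lemma stdCdf_neg (c : ℝ) : stdCdf (-c) = 1 - stdCdf c := by
  have h1 : stdCdf (-c) = ∫ x in Iic (-c), stdPdf x := by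
    rw [stdCdf, integral_Iic_eq_integral_Iio]
  have h2 : ∫ x in Iic (-c), stdPdf x = ∫ x in Iic (-c), stdPdf (-x) := by
    simp_rw [stdPdf_even]
  rw [h1, h2, integral_comp_neg_Iic, neg_neg, stdCdf_tail]

lemma main_int (M v δ : ℝ) (hv : 0 < v) :
    ∫ x, max (x - δ) 0 ∂(gaussianReal M v.toNNReal)
      = (M - δ) * (1 - stdCdf ((δ - M) / Real.sqrt v))
        + Real.sqrt v * stdPdf ((δ - M) / Real.sqrt v) := by
  have hVc : ((v.toNNReal : ℝ)) = v := Real.coe_toNNReal _ hv.le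
  have hVne : v.toNNReal ≠ 0 := by
    simp only [ne_eq, Real.toNNReal_eq_zero, not_le]; exact hv
  have hsv : 0 < Real.sqrt v := Real.sqrt_pos.mpr hv
  rw [integral_gaussianReal M _ hVne,
    integral_pdf_standardize M _ (by rw [hVc]; exact hv)]
  simp_rw [hVc]
  set c := (δ - M) / Real.sqrt v with hc
  have hcc : Real.sqrt v * c = δ - M := by
    rw [hc, mul_div_cancel₀ _ hsv.ne']
  have hmax : ∀ t : ℝ, stdPdf t * max (Real.sqrt v * t + M - δ) 0
      = Real.sqrt v * (stdPdf t * max (t - c) 0) := by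
    intro t
    rw [show max (Real.sqrt v * t + M - δ) 0 = Real.sqrt v * max (t - c) 0 by
      rw [mul_max_of_nonneg _ _ hsv.le, mul_zero]
      congr 1
      rw [mul_sub, hcc]; ring]
    ring
  simp_rw [hmax]
  rw [MeasureTheory.integral_const_mul, integral_max_std c, mul_sub,
    show Real.sqrt v * (c * (1 - stdCdf c)) = (δ - M) * (1 - stdCdf c) by
      rw [← mul_assoc, hcc]]
  ring

lemma main_int_neg (M v δ : ℝ) (hv : 0 < v) :
    ∫ x, max (-x - δ) 0 ∂(gaussianReal M v.toNNReal)
      = (-δ - M) * stdCdf ((-δ - M) / Real.sqrt v)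
        + Real.sqrt v * stdPdf ((-δ - M) / Real.sqrt v) := by
  have hVc : ((v.toNNReal : ℝ)) = v := Real.coe_toNNReal _ hv.le
  have hVne : v.toNNReal ≠ 0 := by
    simp only [ne_eq, Real.toNNReal_eq_zero, not_le]; exact hv
  have hsv : 0 < Real.sqrt v := Real.sqrt_pos.mpr hv
  rw [integral_gaussianReal M _ hVne,
    integral_pdf_standardize M _ (by rw [hVc]; exact hv)]
  simp_rw [hVc]
  set d := (-δ - M) / Real.sqrt v with hd
  have hdd : Real.sqrt v * d = -δ - M := by
    rw [hd, mul_div_cancel₀ _ hsv.ne']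
  rw [← MeasureTheory.integral_neg_eq_self
    (fun t => stdPdf t * max (-(Real.sqrt v * t + M) - δ) 0) volume]
  have heq : ∀ t : ℝ, stdPdf (-t) * max (-(Real.sqrt v * -t + M) - δ) 0
      = Real.sqrt v * (stdPdf t * max (t - -d) 0) := by
    intro t
    rw [stdPdf_even,
      show -(Real.sqrt v * -t + M) - δ = Real.sqrt v * t + (-M - δ) by ring]
    rw [show Real.sqrt v * t + (-M - δ) = Real.sqrt v * (t - -d) by
      rw [mul_sub, mul_neg, hdd]; ring]
    rw [show max (Real.sqrt v * (t - -d)) 0 = Real.sqrt v * max (t - -d) 0 by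
      rw [mul_max_of_nonneg _ _ hsv.le, mul_zero]]
    ring
  simp_rw [heq]
  rw [MeasureTheory.integral_const_mul, integral_max_std (-d), stdPdf_even, stdCdf_neg, mul_sub,
    show Real.sqrt v * (-d * (1 - (1 - stdCdf d))) = -((-δ - M) * stdCdf d) by
      rw [show -d * (1 - (1 - stdCdf d)) = -(d * stdCdf d) by ring, mul_neg,
        ← mul_assoc, hdd]]
  ring

end EIAux

theorem stmt8 (y m s σ δ : ℝ) (hs : 0 < s) (hσ : 0 < σ) :
    (∫ x, max (x - δ) 0 ∂((gaussianReal m ((s ^ 2).toNNReal)).bind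
        (fun h => gaussianReal (y - h) ((σ ^ 2).toNNReal))))
    + (∫ x, max (-x - δ) 0 ∂((gaussianReal m ((s ^ 2).toNNReal)).bind
        (fun h => gaussianReal (y - h) ((σ ^ 2).toNNReal))))
      = (y - m - δ) * (1 - stdCdf ((δ - (y - m)) / Real.sqrt (σ ^ 2 + s ^ 2)))
        + Real.sqrt (σ ^ 2 + s ^ 2) * stdPdf ((δ - (y - m)) / Real.sqrt (σ ^ 2 + s ^ 2))
        + (-δ - (y - m)) * stdCdf ((-δ - (y - m)) / Real.sqrt (σ ^ 2 + s ^ 2))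
        + Real.sqrt (σ ^ 2 + s ^ 2) * stdPdf ((-δ - (y - m)) / Real.sqrt (σ ^ 2 + s ^ 2)) := by
  have hs2 : (s ^ 2).toNNReal ≠ 0 := by
    simp only [ne_eq, Real.toNNReal_eq_zero, not_le]; positivity
  have hσ2 : (σ ^ 2).toNNReal ≠ 0 := by
    simp only [ne_eq, Real.toNNReal_eq_zero, not_le]; positivity
  have hbind : (gaussianReal m ((s ^ 2).toNNReal)).bind
      (fun h => gaussianReal (y - h) ((σ ^ 2).toNNReal))
      = gaussianReal (y - m) ((σ ^ 2 + s ^ 2).toNNReal) := by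
    rw [EIAux.gauss_bind y m _ _ hs2 hσ2]
    congr 1
    rw [Real.toNNReal_add (by positivity) (by positivity), add_comm]
  have hv : (0 : ℝ) < σ ^ 2 + s ^ 2 := by positivity
  rw [hbind, EIAux.main_int (y - m) (σ ^ 2 + s ^ 2) δ hv,
    EIAux.main_int_neg (y - m) (σ ^ 2 + s ^ 2) δ hv]
  ring
end
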